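/- arXiv:math/0503502 — 7 statements merged into one kernel-verified Lean document; each statement's English description precedes it below -/
import Mathlib

section
/- Let 𝒫 be a nontrivial 𝒜-labelled open partition of 𝕋. Then the trajectory map 𝒫_σ : 𝕋̃(𝒫) → 𝒜^{ℤ^D} is continuous with respect to both the Cantor metric d_C and the Besicovitch pseudometric d_B on 𝒜^{ℤ^D}: (a) for every finite 𝕄 ⊆ ℤ^D and every t ∈ 𝕋̃(𝒫) there is an open neighbourhood U of t such that 𝒫_σ(t')_m = 𝒫_σ(t)_m for all m ∈ 𝕄 whenever t' ∈ U ∩ 𝕋̃(𝒫); and (b) for every ε > 0 there is δ > 0 such that for all t, t' ∈ 𝕋̃(𝒫) with d(t,t') ≤ δ one has d_B(𝒫_σ(t), 𝒫_σ(t')) ≤ ε. -/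
open MeasureTheory Filter Topology
open scoped ENNReal

noncomputable section

/-- The `K`-dimensional torus `𝕋 = (ℝ/ℤ)^K`, with its (sup) quotient metric `d`
and Haar (Lebesgue) probability measure `volume`. -/
abbrev Torus (K : ℕ) := Fin K → AddCircle (1 : ℝ)

/-- The lattice `𝕃 = ℤ^D`. -/
abbrev Zd (D : ℕ) := Fin D → ℤ

/-- The box `𝔹(N) = {-N,…,N-1}^D ⊆ ℤ^D`. -/
def box (D N : ℕ) : Finset (Zd D) :=
  Fintype.piFinset fun _ => Finset.Ico (-(N : ℤ)) (N : ℤ)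

open Classical in
/-- `#(J ∩ 𝔹(N)) / (2N)^D`. -/
def densSeq (D : ℕ) (J : Set (Zd D)) (N : ℕ) : ℝ :=
  ((box D N).filter (fun ℓ => ℓ ∈ J)).card / ((2 * N : ℕ) : ℝ) ^ D

/-- The upper Cesàro density `d̄(J)` of `J ⊆ ℤ^D`. -/
def upperDens (D : ℕ) (J : Set (Zd D)) : ℝ :=
  Filter.limsup (densSeq D J) Filter.atTop

/-- The Besicovitch pseudometric `d_B` on `𝒜^{ℤ^D}`. -/
def dB {A : Type*} (D : ℕ) (p q : Zd D → A) : ℝ :=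
  upperDens D {ℓ | p ℓ ≠ q ℓ}

variable {K D : ℕ} {A : Type*}

/-- An `𝒜`-labelled measurable partition of the torus: pairwise disjoint measurable
cells whose union has full measure. -/
structure IsMeasPartition (P : A → Set (Torus K)) : Prop where
  meas : ∀ a, MeasurableSet (P a)
  disj : Pairwise (Function.onFun Disjoint P)
  full : volume (⋃ a, P a) = 1

/-- An `𝒜`-labelled open partition of the torus: pairwise disjoint open cells whose
union is dense and has full measure. -/
structure IsOpenPartition (P : A → Set (Torus K)) : Prop where
  isOpen : ∀ a, IsOpen (P a)
  disj : Pairwise (Function.onFun Disjoint P)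
  dense : Dense (⋃ a, P a)
  full : volume (⋃ a, P a) = 1

/-- `lab` realizes the partition `P` as an `𝒜`-valued function (each cell is labelled
by its index). -/
def IsLabel (P : A → Set (Torus K)) (lab : Torus K → A) : Prop :=
  ∀ a, ∀ t ∈ P a, lab t = a

/-- The symmetric-difference pseudometric `d_△(𝒫,𝒬) = Σ_a λ(P_a △ Q_a)`. -/
def dSym [Fintype A] (P Q : A → Set (Torus K)) : ℝ :=
  ∑ a, (volume (symmDiff (P a) (Q a))).toReal

/-- `𝕋̃(𝒫) = ⋂_ℓ σ^ℓ(P_*)`, where `σ^ℓ(t) = t + τ(ℓ)` and `P_* = ⋃_a P_a`. -/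
def Ttil (τ : Zd D →+ Torus K) (P : A → Set (Torus K)) : Set (Torus K) :=
  ⋂ ℓ : Zd D, (fun x => x + τ ℓ) '' (⋃ a, P a)

/-- The trajectory map `𝒫_σ(t)_ℓ = 𝒫(σ^ℓ t)`, expressed via a labelling `lab` of `𝒫`. -/
def traj (τ : Zd D →+ Torus K) (lab : Torus K → A) (t : Torus K) : Zd D → A :=
  fun ℓ => lab (t + τ ℓ)

/-- A partition is simple if `0` is its only translational symmetry. -/
def IsSimple (P : A → Set (Torus K)) : Prop :=
  ∀ s : Torus K, (∀ a, volume (symmDiff (P a) ((fun x => x + s) '' P a)) = 0) → s = 0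

/-- The cellular automaton `Φ` with neighbourhood `B` and local rule `φ`:
`Φ(x)_ℓ = φ((x_{ℓ+b})_{b∈B})`. -/
def caMap {D : ℕ} {A : Type*} (B : Finset (Zd D)) (φ : (B → A) → A)
    (x : Zd D → A) : Zd D → A :=
  fun ℓ => φ fun b => x (ℓ + (b : Zd D))

/-- The induced map `Φ̂` on partitions: `Q_a = ⋃_{c : φ(c)=a} ⋂_{b∈B} σ^{-b}(P_{c_b})`. -/
def inducedPart (τ : Zd D →+ Torus K) (B : Finset (Zd D)) (φ : (B → A) → A)
    (P : A → Set (Torus K)) : A → Set (Torus K) :=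
  fun a => ⋃ (c : B → A) (_ : φ c = a), ⋂ b : B, {t | t + τ (b : Zd D) ∈ P (c b)}

/-- `x ∈ QS_σ`: `x` is a `σ`-quasisturmian sequence, i.e. the `𝒫`-trajectory of some
point of `𝕋̃(𝒫)` for some open partition `𝒫`. -/
def IsQSSeq (τ : Zd D →+ Torus K) (x : Zd D → A) : Prop :=
  ∃ (P : A → Set (Torus K)) (lab : Torus K → A) (t : Torus K),
    IsOpenPartition P ∧ IsLabel P lab ∧ t ∈ Ttil τ P ∧ x = traj τ lab t

/-!
Rotation by the dense subgroup `τ(ℤ^D)` is uniquely ergodic: along every orbit, box averages of a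
continuous function converge to its integral. For a character the box average factors into
one-dimensional geometric averages, one of which tends to `0` because the character is
nontrivial on some generator `τ(e_j)` (otherwise it would be trivial on the dense range of `τ`);
by Stone–Weierstrass the characters span a dense subspace, and the averaging maps are uniformly
bounded.

Labels of `t` and `t' = t + s` can differ at `ℓ` only if `t + τ ℓ` lies outside the open set of
points `x` such that `x` and `x + s` lie in a common cell. A compact `C ⊆ P_*` of measure close to
`1` is contained in that set for all small `s`, so by equidistribution (via an Urysohn function)
the upper density of such `ℓ` is at most `λ(Cᶜ)`.
-/

open Set UnitAddTorus

instance : IsProbabilityMeasure (volume : Measure UnitAddCircle) := ⟨UnitAddCircle.measure_univ⟩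

section Geometric

variable {𝕜 : Type*} [RCLike 𝕜]

lemma norm_sum_zpow_Ico_le {c : 𝕜} (hc : ‖c‖ = 1) (hc1 : c ≠ 1) (a b : ℤ) :
    ‖∑ m ∈ Finset.Ico a b, c ^ m‖ ≤ 2 / ‖c - 1‖ := by
  have hc0 : c ≠ 0 := by rintro rfl; simp at hc
  rw [Int.Ico_eq_finset_map, Finset.sum_map]
  simp only [Function.Embedding.trans_apply, Nat.castEmbedding_apply, addLeftEmbedding_apply,
    zpow_add₀ hc0, zpow_natCast, ← Finset.mul_sum, geom_sum_eq hc1, norm_mul, norm_zpow, hc,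
    one_zpow, one_mul, norm_div]
  gcongr
  calc ‖c ^ (b - a).toNat - 1‖ ≤ ‖c ^ (b - a).toNat‖ + ‖(1 : 𝕜)‖ := norm_sub_le _ _
    _ = 2 := by rw [norm_pow, hc]; norm_num

def zpowAvg (c : 𝕜) (N : ℕ) : 𝕜 :=
  (∑ m ∈ Finset.Ico (-(N : ℤ)) N, c ^ m) / ((2 * N : ℕ) : 𝕜)

lemma norm_zpowAvg_le_one {c : 𝕜} (hc : ‖c‖ = 1) (N : ℕ) : ‖zpowAvg c N‖ ≤ 1 := by
  rw [zpowAvg, norm_div, RCLike.norm_natCast]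
  refine div_le_one_of_le₀ ((norm_sum_le _ _).trans ?_) (Nat.cast_nonneg _)
  simp only [norm_zpow, hc, one_zpow, Finset.sum_const, Int.card_Ico, nsmul_eq_mul, mul_one]
  exact_mod_cast (show (N - -(N : ℤ)).toNat ≤ 2 * N by omega)

lemma tendsto_zpowAvg_zero {c : 𝕜} (hc : ‖c‖ = 1) (hc1 : c ≠ 1) :
    Tendsto (zpowAvg c) atTop (𝓝 0) := by
  refine squeeze_zero_norm (fun N => ?_) (tendsto_const_div_atTop_nhds_zero_nat ‖c - 1‖⁻¹)
  rw [zpowAvg, norm_div, RCLike.norm_natCast]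
  calc ‖∑ m ∈ Finset.Ico (-(N : ℤ)) N, c ^ m‖ / ((2 * N : ℕ) : ℝ)
      ≤ 2 / ‖c - 1‖ / ((2 * N : ℕ) : ℝ) := by gcongr; exact norm_sum_zpow_Ico_le hc hc1 _ _
    _ = ‖c - 1‖⁻¹ / N := by push_cast; field_simp

end Geometric

section BoxAverage

variable (𝕜 : Type*) [RCLike 𝕜] {G : Type*} [AddCommGroup G]

lemma card_box (D N : ℕ) : (box D N).card = (2 * N) ^ D := by
  simp only [box, Fintype.card_piFinset, Int.card_Ico, Finset.prod_const, Finset.card_univ,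
    Fintype.card_fin]
  congr 1
  omega

def boxAvg (τ : Zd D →+ G) (t : G) (N : ℕ) : (G → 𝕜) →ₗ[𝕜] 𝕜 where
  toFun g := (∑ ℓ ∈ box D N, g (t + τ ℓ)) / ((2 * N : ℕ) : 𝕜) ^ D
  map_add' g h := by simp only [Pi.add_apply, Finset.sum_add_distrib, add_div]
  map_smul' c g := by
    simp only [Pi.smul_apply, smul_eq_mul, ← Finset.mul_sum, mul_div_assoc, RingHom.id_apply]

variable {𝕜}

lemma boxAvg_apply (τ : Zd D →+ G) (t : G) (N : ℕ) (g : G → 𝕜) :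
    boxAvg 𝕜 τ t N g = (∑ ℓ ∈ box D N, g (t + τ ℓ)) / ((2 * N : ℕ) : 𝕜) ^ D := rfl

lemma norm_boxAvg_le (τ : Zd D →+ G) (t : G) (N : ℕ) {g : G → 𝕜} {C : ℝ}
    (hg : ∀ x, ‖g x‖ ≤ C) : ‖boxAvg 𝕜 τ t N g‖ ≤ C := by
  rw [boxAvg_apply, norm_div, norm_pow, RCLike.norm_natCast]
  refine div_le_of_le_mul₀ (by positivity) ((norm_nonneg _).trans (hg 0)) ?_
  calc ‖∑ ℓ ∈ box D N, g (t + τ ℓ)‖ ≤ ∑ ℓ ∈ box D N, C := norm_sum_le_of_le _ fun ℓ _ => hg _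
    _ = C * ((2 * N : ℕ) : ℝ) ^ D := by rw [Finset.sum_const, card_box]; push_cast; ring

lemma boxAvg_const (τ : Zd D →+ G) (t : G) {N : ℕ} (hN : N ≠ 0) (c : 𝕜) :
    boxAvg 𝕜 τ t N (fun _ => c) = c := by
  rw [boxAvg_apply, Finset.sum_const, card_box, nsmul_eq_mul]
  push_cast
  field_simp

end BoxAverage

theorem LinearMap.tendsto_apply_of_dense_span {𝕜 E F ι : Type*} [NontriviallyNormedField 𝕜]
    [SeminormedAddCommGroup E] [NormedSpace 𝕜 E] [SeminormedAddCommGroup F] [NormedSpace 𝕜 F]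
    {l : Filter ι} {T : ι → E →ₗ[𝕜] F} {L : E →ₗ[𝕜] F} {C C' : ℝ}
    (hT : ∀ i x, ‖T i x‖ ≤ C * ‖x‖) (hL : ∀ x, ‖L x‖ ≤ C' * ‖x‖) {s : Set E}
    (hs : (Submodule.span 𝕜 s).topologicalClosure = ⊤)
    (h : ∀ x ∈ s, Tendsto (T · x) l (𝓝 (L x))) (x : E) :
    Tendsto (T · x) l (𝓝 (L x)) := by
  let S : Submodule 𝕜 E :=
    { carrier := {x | Tendsto (T · x) l (𝓝 (L x))}
      add_mem' := fun {a b} ha hb => by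
        simpa only [mem_ofPred_eq, map_add] using Tendsto.add ha hb
      zero_mem' := by simpa only [mem_ofPred_eq, map_zero] using tendsto_const_nhds
      smul_mem' := fun c x hx => by simpa only [mem_ofPred_eq, map_smul] using hx.const_smul c }
  have hS : IsClosed (S : Set E) :=
    (LipschitzWith.uniformEquicontinuous _ _ fun i =>
      AddMonoidHomClass.lipschitz_of_bound (T i) C (hT i)).equicontinuous.isClosed_setOfPred_tendsto
      (AddMonoidHomClass.continuous_of_bound L C' hL)
  have hspan : Submodule.span 𝕜 s ≤ S := Submodule.span_le.2 h
  have := (Submodule.span 𝕜 s).topologicalClosure_minimal hspan hS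
  rw [hs] at this
  exact this Submodule.mem_top

lemma AddChar.apply_eq_prod_zpow {M : Type*} [DivisionCommMonoid M]
    (χ : AddChar (Zd D) M) (ℓ : Zd D) : χ ℓ = ∏ j, χ (Pi.single j 1) ^ ℓ j := by
  conv_lhs => rw [← Finset.univ_sum_single ℓ]
  induction (Finset.univ : Finset (Fin D)) using Finset.cons_induction with
  | empty => simp
  | cons j s hj ih =>
    rw [Finset.sum_cons, Finset.prod_cons, AddChar.map_add_eq_mul, ih, ← AddChar.map_zsmul_eq_zpow,
      ← Pi.single_smul, smul_eq_mul, mul_one]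

section BoxAverageChar

variable {𝕜 : Type*} [RCLike 𝕜] {G : Type*} [AddCommGroup G]

lemma boxAvg_addChar (ψ : AddChar G 𝕜) (τ : Zd D →+ G) (t : G) (N : ℕ) :
    boxAvg 𝕜 τ t N ψ = ψ t * ∏ j, zpowAvg (ψ (τ (Pi.single j 1))) N := by
  classical
  have hψτ (ℓ : Zd D) : ψ (t + τ ℓ) = ψ t * ∏ j, ψ (τ (Pi.single j 1)) ^ ℓ j := by
    rw [AddChar.map_add_eq_mul]
    exact congrArg _ ((ψ.compAddMonoidHom τ).apply_eq_prod_zpow ℓ)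
  simp only [boxAvg_apply, zpowAvg, hψτ, ← Finset.mul_sum, Finset.prod_div_distrib,
    Finset.prod_const, Finset.card_univ, Fintype.card_fin, mul_div_assoc, Finset.prod_univ_sum,
    box]

lemma tendsto_boxAvg_addChar_zero (ψ : AddChar G 𝕜) (hψ : ∀ x, ‖ψ x‖ = 1) (τ : Zd D →+ G)
    (t : G) {j₀ : Fin D} (hj₀ : ψ (τ (Pi.single j₀ 1)) ≠ 1) :
    Tendsto (fun N => boxAvg 𝕜 τ t N ψ) atTop (𝓝 0) := by
  refine squeeze_zero_norm (fun N => ?_) (by simpa using (tendsto_zpowAvg_zero (hψ _) hj₀).norm)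
  rw [boxAvg_addChar, norm_mul, hψ, one_mul, norm_prod,
    ← Finset.mul_prod_erase _ _ (Finset.mem_univ j₀)]
  exact mul_le_of_le_one_right (norm_nonneg _)
    (Finset.prod_le_one (fun _ _ => norm_nonneg _) fun j _ => norm_zpowAvg_le_one (hψ _) N)

end BoxAverageChar

section Torus

variable {d : Type*} [Fintype d]

def mFourierChar (n : d → ℤ) : AddChar (UnitAddTorus d) ℂ where
  toFun := mFourier n
  map_zero_eq_one' := by simp [mFourier]
  map_add_eq_mul' x y := by
    simp only [mFourier, ContinuousMap.coe_mk, Pi.add_apply, fourier_apply, smul_add,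
      AddCircle.toCircle_add, Circle.coe_mul, Finset.prod_mul_distrib]

lemma coe_mFourierChar (n : d → ℤ) : ⇑(mFourierChar n) = mFourier n := rfl

lemma norm_mFourier_apply (n : d → ℤ) (x : UnitAddTorus d) : ‖mFourier n x‖ = 1 := by
  simp [mFourier, norm_prod, fourier_apply, Circle.norm_coe]

lemma exists_mFourier_ne_one {n : d → ℤ} (hn : n ≠ 0) : ∃ x, mFourier n x ≠ 1 := by
  classical
  obtain ⟨i, hi⟩ := Function.ne_iff.1 hn
  refine ⟨Pi.single i ((2⁻¹ / n i : ℝ) : UnitAddCircle), ?_⟩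
  have hhalf := fourier_add_half_inv_index (T := 1) hi one_pos 0
  simp only [zero_add, fourier_eval_zero, one_div] at hhalf
  rw [mFourier, ContinuousMap.coe_mk, Finset.prod_eq_single i
    (fun j _ hj => by simp [Pi.single_eq_of_ne hj]) (by simp), Pi.single_eq_same, hhalf]
  norm_num

end Torus

lemma integral_addChar_eq_zero {G : Type*} [AddGroup G] [MeasurableSpace G] [MeasurableAdd G]
    (μ : Measure G) [μ.IsAddRightInvariant] (ψ : AddChar G ℂ) {x₀ : G} (hx₀ : ψ x₀ ≠ 1) :
    ∫ x, ψ x ∂μ = 0 := by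
  have h : ∫ x, ψ x ∂μ = (∫ x, ψ x ∂μ) * ψ x₀ := by
    simpa only [AddChar.map_add_eq_mul, integral_mul_const] using
      (integral_add_right_eq_self (μ := μ) (fun x => ψ x) x₀).symm
  have : (∫ x, ψ x ∂μ) * (ψ x₀ - 1) = 0 := by rw [mul_sub_one, ← h, sub_self]
  exact (mul_eq_zero.1 this).resolve_right (sub_ne_zero.2 hx₀)

section Equidistribution

variable {τ : Zd D →+ Torus K}

lemma exists_mFourier_apply_ne_one (hdense : DenseRange τ) {n : Fin K → ℤ} (hn : n ≠ 0) :
    ∃ j, mFourier n (τ (Pi.single j 1)) ≠ 1 := by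
  by_contra! h
  obtain ⟨x, hx⟩ := exists_mFourier_ne_one hn
  refine hx (hdense.induction_on x (isClosed_eq (mFourier n).continuous continuous_const)
    fun ℓ => ?_)
  rw [← coe_mFourierChar, ← AddChar.compAddMonoidHom_apply, AddChar.apply_eq_prod_zpow]
  simp [coe_mFourierChar, h]

lemma tendsto_boxAvg_mFourier (hdense : DenseRange τ) (t : Torus K) (n : Fin K → ℤ) :
    Tendsto (fun N => boxAvg ℂ τ t N (mFourier n)) atTop (𝓝 (∫ x, mFourier n x)) := by
  rcases eq_or_ne n 0 with rfl | hn
  · simp only [mFourier_zero, ContinuousMap.coe_one, Pi.one_apply, integral_const,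
      probReal_univ, one_smul]
    exact tendsto_const_nhds.congr' <| (eventually_ne_atTop 0).mono fun N hN =>
      (boxAvg_const τ t hN 1).symm
  · obtain ⟨x₀, hx₀⟩ := exists_mFourier_ne_one hn
    obtain ⟨j₀, hj₀⟩ := exists_mFourier_apply_ne_one hdense hn
    rw [← coe_mFourierChar, integral_addChar_eq_zero volume _ hx₀]
    exact tendsto_boxAvg_addChar_zero _ (norm_mFourier_apply n) τ t hj₀

theorem tendsto_boxAvg_integral (hdense : DenseRange τ) (t : Torus K) (g : C(Torus K, ℂ)) :
    Tendsto (fun N => boxAvg ℂ τ t N g) atTop (𝓝 (∫ x, g x)) := by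
  let coeLM : C(Torus K, ℂ) →ₗ[ℂ] (Torus K → ℂ) := ContinuousMap.coeFnLinearMap ℂ
  let integralLM : C(Torus K, ℂ) →ₗ[ℂ] ℂ :=
    { toFun g := ∫ x, g x
      map_add' g h := integral_add (g.continuous.integrable_of_hasCompactSupport
          (.of_compactSpace _)) (h.continuous.integrable_of_hasCompactSupport (.of_compactSpace _))
      map_smul' c g := integral_const_mul c _ }
  refine LinearMap.tendsto_apply_of_dense_span (T := fun N => (boxAvg ℂ τ t N).comp coeLM)
    (L := integralLM) (C := 1) (C' := 1) (fun N g => ?_) (fun g => ?_)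
    span_mFourier_closure_eq_top ?_ g
  · exact (norm_boxAvg_le τ t N g.norm_coe_le_norm).trans_eq (one_mul _).symm
  · rw [one_mul, ← BoundedContinuousFunction.norm_mkOfCompact]
    exact (BoundedContinuousFunction.mkOfCompact g).norm_integral_le_norm volume
  · rintro _ ⟨n, rfl⟩
    exact tendsto_boxAvg_mFourier hdense t n

theorem tendsto_boxAvg_integral_real (hdense : DenseRange τ) (t : Torus K) (g : C(Torus K, ℝ)) :
    Tendsto (fun N => boxAvg ℝ τ t N g) atTop (𝓝 (∫ x, g x)) := by
  let gℂ : C(Torus K, ℂ) := ⟨fun x => g x, by fun_prop⟩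
  convert (Complex.continuous_re.tendsto _).comp (tendsto_boxAvg_integral hdense t gℂ) using 1
  · ext N
    simp only [gℂ, boxAvg_apply, Function.comp_apply, ContinuousMap.coe_mk]
    rw [← Complex.ofReal_sum]
    norm_cast
  · simp only [gℂ, ContinuousMap.coe_mk, integral_complex_ofReal, Complex.ofReal_re]

end Equidistribution

section UpperDensity

variable {τ : Zd D →+ Torus K}

lemma densSeq_nonneg (J : Set (Zd D)) (N : ℕ) : 0 ≤ densSeq D J N := by
  unfold densSeq
  positivity

lemma densSeq_le_boxAvg {G : Type*} [AddCommGroup G] (τ : Zd D →+ G) (t : G) {J : Set (Zd D)}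
    {g : G → ℝ} (hg : 0 ≤ g) (hgJ : ∀ ℓ ∈ J, 1 ≤ g (t + τ ℓ)) (N : ℕ) :
    densSeq D J N ≤ boxAvg ℝ τ t N g := by
  classical
  rw [densSeq, boxAvg_apply]
  gcongr
  calc (((box D N).filter (· ∈ J)).card : ℝ) = ∑ ℓ ∈ (box D N).filter (· ∈ J), 1 := by simp
    _ ≤ ∑ ℓ ∈ (box D N).filter (· ∈ J), g (t + τ ℓ) :=
      Finset.sum_le_sum fun ℓ hℓ => hgJ ℓ (Finset.mem_filter.1 hℓ).2
    _ ≤ ∑ ℓ ∈ box D N, g (t + τ ℓ) :=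
      Finset.sum_le_sum_of_subset_of_nonneg (Finset.filter_subset _ _) fun ℓ _ _ => hg _

theorem upperDens_le_measureReal (hdense : DenseRange τ) (t : Torus K) {F U : Set (Torus K)}
    (hF : IsClosed F) (hU : IsOpen U) (hFU : F ⊆ U) {J : Set (Zd D)}
    (hJ : ∀ ℓ ∈ J, t + τ ℓ ∈ F) : upperDens D J ≤ volume.real U := by
  obtain ⟨g, hg0, hg1, hg01⟩ := exists_continuous_zero_one_of_isClosed hU.isClosed_compl hF
    (disjoint_compl_left_iff_subset.2 hFU)
  have hlim := tendsto_boxAvg_integral_real hdense t g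
  have hle : ∀ N, densSeq D J N ≤ boxAvg ℝ τ t N g :=
    densSeq_le_boxAvg τ t (fun x => (hg01 x).1) fun ℓ hℓ => (hg1 (hJ ℓ hℓ)).ge
  have hint : ∫ x, g x ≤ volume.real U := by
    rw [← integral_indicator_one hU.measurableSet]
    refine integral_mono (g.continuous.integrable_of_hasCompactSupport (.of_compactSpace _))
      ((integrable_const 1).indicator hU.measurableSet) fun x => ?_
    by_cases hx : x ∈ U
    · simpa [hx] using (hg01 x).2
    · simp [hx, hg0 hx]
  calc upperDens D J ≤ limsup (fun N => boxAvg ℝ τ t N g) atTop :=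
        limsup_le_limsup (.of_forall hle)
          (isCoboundedUnder_le_of_le atTop (densSeq_nonneg J)) hlim.isBoundedUnder_le
    _ = ∫ x, g x := hlim.limsup_eq
    _ ≤ volume.real U := hint

end UpperDensity

section Partition

variable {X : Type*}

def sameCell [Add X] (P : A → Set X) (s : X) : Set X := {x | ∃ a, x ∈ P a ∧ x + s ∈ P a}

lemma isOpen_sameCell [TopologicalSpace X] [Add X] [ContinuousAdd X] {P : A → Set X}
    (hP : ∀ a, IsOpen (P a)) (s : X) : IsOpen (sameCell P s) := by
  simp only [sameCell, ofPred_exists]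
  exact isOpen_iUnion fun a => (hP a).inter ((hP a).preimage (continuous_add_const s))

lemma eventually_subset_sameCell [TopologicalSpace X] [AddZeroClass X] [ContinuousAdd X]
    {P : A → Set X} (hP : ∀ a, IsOpen (P a)) {C : Set X} (hC : IsCompact C)
    (hCP : C ⊆ ⋃ a, P a) : ∀ᶠ s in 𝓝 0, C ⊆ sameCell P s := by
  refine hC.eventually_forall_of_forall_eventually fun x hx => ?_
  obtain ⟨a, ha⟩ := mem_iUnion.1 (hCP hx)
  have hopen : IsOpen {z : X × X | z.2 ∈ P a ∧ z.2 + z.1 ∈ P a} :=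
    ((hP a).preimage continuous_snd).inter ((hP a).preimage (continuous_snd.add continuous_fst))
  filter_upwards [hopen.mem_nhds (x := (0, x)) ⟨ha, by rwa [add_zero]⟩] with z hz using ⟨a, hz⟩

lemma exists_isCompact_measureReal_compl_lt [TopologicalSpace X] [T2Space X] [MeasurableSpace X]
    [OpensMeasurableSpace X] {μ : Measure X} [IsFiniteMeasure μ] [μ.InnerRegularCompactLTTop]
    {O : Set X} (hO : MeasurableSet O) (hfull : μ Oᶜ = 0) {ε : ℝ} (hε : 0 < ε) :
    ∃ C ⊆ O, IsCompact C ∧ μ.real Cᶜ < ε := by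
  obtain ⟨C, hCO, hC, hOC⟩ := hO.exists_isCompact_sdiff_lt (measure_ne_top μ O)
    (ENNReal.ofReal_pos.2 hε).ne'
  refine ⟨C, hCO, hC, ?_⟩
  have hcompl : μ Cᶜ ≤ μ (O \ C) := by
    calc μ Cᶜ ≤ μ (O \ C ∪ Oᶜ) := measure_mono fun x hx => by by_cases x ∈ O <;> simp_all
      _ ≤ μ (O \ C) + μ Oᶜ := measure_union_le _ _
      _ = μ (O \ C) := by rw [hfull, add_zero]
  exact ENNReal.toReal_lt_of_lt_ofReal (hcompl.trans_lt hOC)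

end Partition

variable {P : A → Set (Torus K)} {lab : Torus K → A}

lemma IsLabel.mem_apply (hlab : IsLabel P lab) {a : A} {x : Torus K} (hx : x ∈ P a) :
    x ∈ P (lab x) := by
  rwa [hlab a x hx]

lemma IsLabel.apply_add_of_mem_sameCell (hlab : IsLabel P lab) {s x : Torus K}
    (hx : x ∈ sameCell P s) : lab (x + s) = lab x := by
  obtain ⟨a, hxa, hxsa⟩ := hx
  rw [hlab a _ hxa, hlab a _ hxsa]

lemma add_mem_of_mem_Ttil {τ : Zd D →+ Torus K} {t : Torus K} (ht : t ∈ Ttil τ P) (ℓ : Zd D) :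
    t + τ ℓ ∈ ⋃ a, P a := by
  have := mem_iInter.1 ht (-ℓ)
  rwa [image_add_right, mem_preimage, map_neg, neg_neg] at this

lemma dB_traj_le_measureReal_compl {τ : Zd D →+ Torus K} (hdense : DenseRange τ)
    (hP : ∀ a, IsOpen (P a)) (hlab : IsLabel P lab) {C : Set (Torus K)} (hC : IsCompact C)
    {t t' : Torus K} (hCt : C ⊆ sameCell P (t' - t)) :
    dB D (traj τ lab t) (traj τ lab t') ≤ volume.real Cᶜ := by
  refine upperDens_le_measureReal hdense t (isOpen_sameCell hP _).isClosed_compl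
    hC.isClosed.isOpen_compl (compl_subset_compl.2 hCt) fun ℓ hℓ hmem => hℓ ?_
  rw [traj, traj, ← hlab.apply_add_of_mem_sameCell hmem, add_right_comm, add_sub_cancel]

theorem traj_continuous_general {K D : ℕ} {A : Type*}
    (τ : Zd D →+ Torus K) (hdense : DenseRange τ)
    (P : A → Set (Torus K)) (hP : IsOpenPartition P)
    (lab : Torus K → A) (hlab : IsLabel P lab) :
    ((∀ M : Finset (Zd D), ∀ t ∈ Ttil τ P, ∃ U : Set (Torus K), IsOpen U ∧ t ∈ U ∧
        ∀ t' ∈ U ∩ Ttil τ P, ∀ m ∈ M, traj τ lab t' m = traj τ lab t m) ∧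
      (∀ ε : ℝ, 0 < ε → ∃ δ : ℝ, 0 < δ ∧ ∀ t ∈ Ttil τ P, ∀ t' ∈ Ttil τ P,
        dist t t' ≤ δ → dB D (traj τ lab t) (traj τ lab t') ≤ ε)) := by
  refine ⟨fun M t ht => ?_, fun ε hε => ?_⟩
  · refine ⟨⋂ m ∈ M, (· + τ m) ⁻¹' P (lab (t + τ m)),
      isOpen_biInter_finset fun m _ => (hP.isOpen _).preimage (continuous_add_const _),
      mem_iInter₂.2 fun m _ => ?_, fun t' ht' m hm => hlab _ _ (mem_iInter₂.1 ht'.1 m hm)⟩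
    obtain ⟨a, ha⟩ := mem_iUnion.1 (add_mem_of_mem_Ttil ht m)
    exact hlab.mem_apply ha
  · have hmeas : MeasurableSet (⋃ a, P a) := (isOpen_iUnion hP.isOpen).measurableSet
    obtain ⟨C, hCP, hC, hCε⟩ := exists_isCompact_measureReal_compl_lt hmeas
      ((prob_compl_eq_zero_iff hmeas).2 hP.full) hε
    obtain ⟨δ, hδ, hδC⟩ :=
      Metric.eventually_nhds_iff.1 (eventually_subset_sameCell hP.isOpen hC hCP)
    refine ⟨δ / 2, half_pos hδ, fun t _ t' _ htt' => ?_⟩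
    refine (dB_traj_le_measureReal_compl hdense hP.isOpen hlab hC (hδC ?_)).trans hCε.le
    rw [dist_zero_right, ← dist_eq_norm, dist_comm]
    linarith

/-- For a nontrivial open partition `𝒫`, the trajectory map
`𝒫_σ : 𝕋̃(𝒫) → 𝒜^{ℤ^D}` is continuous both for the Cantor metric (a) and for the
Besicovitch pseudometric (b). -/
theorem traj_continuous {K D : ℕ} (hK : 1 ≤ K) (hD : 1 ≤ D) {A : Type*} [Fintype A]
    (τ : Zd D →+ Torus K) (hinj : Function.Injective τ) (hdense : DenseRange τ)
    (P : A → Set (Torus K)) (hP : IsOpenPartition P)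
    (hnontriv : ∃ a b : A, a ≠ b ∧ (P a).Nonempty ∧ (P b).Nonempty)
    (lab : Torus K → A) (hlab : IsLabel P lab) :
    ((∀ M : Finset (Zd D), ∀ t ∈ Ttil τ P, ∃ U : Set (Torus K), IsOpen U ∧ t ∈ U ∧
        ∀ t' ∈ U ∩ Ttil τ P, ∀ m ∈ M, traj τ lab t' m = traj τ lab t m) ∧
      (∀ ε : ℝ, 0 < ε → ∃ δ : ℝ, 0 < δ ∧ ∀ t ∈ Ttil τ P, ∀ t' ∈ Ttil τ P,
        dist t t' ≤ δ → dB D (traj τ lab t) (traj τ lab t') ≤ ε)) :=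
  traj_continuous_general τ hdense P hP lab hlab
end
end

section
/- (Generalization of Hof–Knill.) Let Φ be a cellular automaton on 𝒜^{ℤ^D} with neighbourhood 𝔅 and local rule φ, and let 𝒫 be an 𝒜-labelled measurable partition of 𝕋 with 𝒬 = Φ̂(𝒫). Then: (a) 𝕋̃(𝒬) = 𝕋̃(𝒫); (b) if 𝒫 is an open partition then 𝒬 is an open partition; and (c) for every t ∈ 𝕋̃(𝒫) one has Φ(𝒫_σ(t)) = 𝒬_σ(t). Consequently, the image under Φ of any σ-quasisturmian sequence is again a σ-quasisturmian sequence. -/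
open MeasureTheory Filter Topology
open scoped ENNReal

noncomputable section

variable {K D : ℕ} {A : Type*}

section Aux

variable {K D : ℕ} {A : Type*}

lemma mem_Ttil (τ : Zd D →+ Torus K) (P : A → Set (Torus K)) {t : Torus K} :
    t ∈ Ttil τ P ↔ ∀ ℓ : Zd D, t + τ ℓ ∈ ⋃ a, P a := by
  constructor
  · intro h ℓ
    obtain ⟨s, hs, hst⟩ := Set.mem_iInter.1 h (-ℓ)
    have hseq : s = t + τ ℓ := by
      have h1 : s + τ (-ℓ) = t := hst
      rw [map_neg] at h1
      rw [← h1]; abel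
    rwa [hseq] at hs
  · intro h
    refine Set.mem_iInter.2 fun ℓ => ⟨t + τ (-ℓ), h (-ℓ), ?_⟩
    show t + τ (-ℓ) + τ ℓ = t
    rw [map_neg, add_assoc, neg_add_cancel, add_zero]

lemma unionQ (τ : Zd D →+ Torus K) (B : Finset (Zd D)) (φ : (B → A) → A)
    (P : A → Set (Torus K)) :
    (⋃ a, inducedPart τ B φ P a)
      = ⋂ b : B, (fun t => t + τ (b : Zd D)) ⁻¹' (⋃ a, P a) := by
  ext t
  simp only [inducedPart, Set.mem_iUnion, Set.mem_iInter, Set.mem_preimage, Set.mem_setOf_eq]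
  constructor
  · rintro ⟨a, c, -, hc⟩ b
    exact ⟨c b, hc b⟩
  · intro h
    choose f hf using h
    exact ⟨φ f, f, rfl, hf⟩

lemma Ttil_eq (τ : Zd D →+ Torus K) (B : Finset (Zd D)) (hB : B.Nonempty)
    (φ : (B → A) → A) (P : A → Set (Torus K)) :
    Ttil τ (inducedPart τ B φ P) = Ttil τ P := by
  obtain ⟨b0, hb0⟩ := hB
  ext t
  rw [mem_Ttil, mem_Ttil]
  constructor
  · intro h m
    have := h (m - b0)
    rw [unionQ] at this
    have h2 := Set.mem_iInter.1 this ⟨b0, hb0⟩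
    simpa [← map_add, add_assoc, sub_add_cancel] using h2
  · intro h ℓ
    rw [unionQ]
    refine Set.mem_iInter.2 fun b => ?_
    simpa [add_assoc, ← map_add] using h (ℓ + (b : Zd D))

lemma mem_label (P : A → Set (Torus K)) (lab : Torus K → A) (hlab : IsLabel P lab)
    {u : Torus K} (hu : u ∈ ⋃ a, P a) : u ∈ P (lab u) := by
  obtain ⟨a, ha⟩ := Set.mem_iUnion.1 hu
  rwa [hlab a u ha]

lemma disjQ (τ : Zd D →+ Torus K) (B : Finset (Zd D)) (φ : (B → A) → A)
    {P : A → Set (Torus K)} (hdisj : Pairwise (Function.onFun Disjoint P)) :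
    Pairwise (Function.onFun Disjoint (inducedPart τ B φ P)) := by
  intro a a' haa'
  rw [Function.onFun, Set.disjoint_left]
  intro t ht ht'
  simp only [inducedPart, Set.mem_iUnion, Set.mem_iInter, Set.mem_setOf_eq] at ht ht'
  obtain ⟨c, hc, hcm⟩ := ht
  obtain ⟨c', hc', hcm'⟩ := ht'
  have hcc : c ≠ c' := by
    rintro rfl; exact haa' (hc.symm.trans hc')
  obtain ⟨b, hb⟩ : ∃ b, c b ≠ c' b := by
    by_contra hcon
    push_neg at hcon
    exact hcc (funext hcon)
  exact Set.disjoint_left.1 (hdisj hb) (hcm b) (hcm' b)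

lemma caMap_traj (τ : Zd D →+ Torus K) (B : Finset (Zd D)) (φ : (B → A) → A)
    (P : A → Set (Torus K)) (lab labQ : Torus K → A) (hlab : IsLabel P lab)
    (hlabQ : IsLabel (inducedPart τ B φ P) labQ)
    {t : Torus K} (ht : t ∈ Ttil τ P) :
    caMap B φ (traj τ lab t) = traj τ labQ t := by
  funext ℓ
  have hmem : ∀ m : Zd D, t + τ m ∈ ⋃ a, P a := (mem_Ttil τ P).1 ht
  set c : B → A := fun b => lab (t + τ ℓ + τ (b : Zd D)) with hc
  have hQ : t + τ ℓ ∈ inducedPart τ B φ P (φ c) := by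
    simp only [inducedPart, Set.mem_iUnion, Set.mem_iInter, Set.mem_setOf_eq]
    refine ⟨c, rfl, fun b => ?_⟩
    exact mem_label P lab hlab (by rw [add_assoc, ← map_add]; exact hmem _)
  have hval : labQ (t + τ ℓ) = φ c := hlabQ (φ c) _ hQ
  show φ (fun b => lab (t + τ (ℓ + (b : Zd D)))) = labQ (t + τ ℓ)
  rw [hval]
  congr 1
  funext b
  rw [map_add, ← add_assoc]

lemma openQ (τ : Zd D →+ Torus K) (B : Finset (Zd D)) (hB : B.Nonempty)
    (φ : (B → A) → A) {P : A → Set (Torus K)} (hP : IsOpenPartition P) :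
    IsOpenPartition (inducedPart τ B φ P) := by
  have hPopen : IsOpen (⋃ a, P a) := isOpen_iUnion hP.isOpen
  have hpre : ∀ b : B, IsOpen ((fun t : Torus K => t + τ (b : Zd D)) ⁻¹' (⋃ a, P a)) :=
    fun b => hPopen.preimage (by continuity)
  have hpred : ∀ b : B, Dense ((fun t : Torus K => t + τ (b : Zd D)) ⁻¹' (⋃ a, P a)) :=
    fun b => hP.dense.preimage (f := Homeomorph.addRight (τ (b : Zd D)))
      (Homeomorph.addRight (τ (b : Zd D))).isOpenMap
  have hPmeas : MeasurableSet (⋃ a, P a) := hPopen.measurableSet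
  have hcompl : volume ((⋃ a, P a)ᶜ) = 0 := by
    have huniv : volume (Set.univ : Set (Torus K)) = 1 := by
      rw [volume_pi, MeasureTheory.Measure.pi_univ]
      simp [AddCircle.measure_univ]
    have := measure_compl hPmeas (by rw [hP.full]; exact ENNReal.one_ne_top)
    rw [hP.full, huniv] at this
    simpa using this
  refine ⟨?_, disjQ τ B φ hP.disj, ?_, ?_⟩
  · intro a
    refine isOpen_iUnion fun c => isOpen_iUnion fun _ => isOpen_iInter_of_finite fun b => ?_
    exact (hP.isOpen (c b)).preimage (by continuity)
  · rw [unionQ]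
    exact dense_iInter_of_isOpen hpre hpred
  · rw [unionQ]
    have hQcompl : volume ((⋂ b : B, (fun t : Torus K => t + τ (b : Zd D)) ⁻¹' (⋃ a, P a))ᶜ)
        = 0 := by
      rw [Set.compl_iInter]
      refine measure_iUnion_null fun b => ?_
      rw [← Set.preimage_compl, measure_preimage_add_right]
      exact hcompl
    have huniv : volume (Set.univ : Set (Torus K)) = 1 := by
      rw [volume_pi, MeasureTheory.Measure.pi_univ]
      simp [AddCircle.measure_univ]
    have hle : (1 : ℝ≥0∞) ≤ volume (⋂ b : B, (fun t : Torus K => t + τ (b : Zd D)) ⁻¹' (⋃ a, P a)) := by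
      calc (1 : ℝ≥0∞) = volume (Set.univ : Set (Torus K)) := huniv.symm
        _ ≤ volume (⋂ b : B, (fun t : Torus K => t + τ (b : Zd D)) ⁻¹' (⋃ a, P a))
            + volume ((⋂ b : B, (fun t : Torus K => t + τ (b : Zd D)) ⁻¹' (⋃ a, P a))ᶜ) := by
          rw [← Set.union_compl_self (⋂ b : B, (fun t : Torus K => t + τ (b : Zd D)) ⁻¹' (⋃ a, P a))]
          exact measure_union_le _ _
        _ = volume (⋂ b : B, (fun t : Torus K => t + τ (b : Zd D)) ⁻¹' (⋃ a, P a)) := by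
          rw [hQcompl, add_zero]
    have hge : volume (⋂ b : B, (fun t : Torus K => t + τ (b : Zd D)) ⁻¹' (⋃ a, P a)) ≤ 1 := by
      rw [← huniv]
      exact measure_mono (Set.subset_univ _)
    exact le_antisymm hge hle

end Aux

/-- generalization of Hof–Knill. For a CA `Φ` with neighbourhood `B`
and local rule `φ`, and `𝒬 = Φ̂(𝒫)`: (a) `𝕋̃(𝒬) = 𝕋̃(𝒫)`; (b) if `𝒫` is an open
partition then so is `𝒬`; (c) `Φ(𝒫_σ(t)) = 𝒬_σ(t)` for all `t ∈ 𝕋̃(𝒫)`; consequently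
the image of a quasisturmian sequence under `Φ` is quasisturmian. -/
theorem hof_knill {K D : ℕ} (hK : 1 ≤ K) (hD : 1 ≤ D) {A : Type*} [Fintype A]
    (τ : Zd D →+ Torus K) (hinj : Function.Injective τ)
    (B : Finset (Zd D)) (hB : B.Nonempty) (φ : (B → A) → A)
    (P : A → Set (Torus K)) (hP : IsMeasPartition P)
    (lab labQ : Torus K → A) (hlab : IsLabel P lab)
    (hlabQ : IsLabel (inducedPart τ B φ P) labQ) :
    Ttil τ (inducedPart τ B φ P) = Ttil τ P ∧
    (IsOpenPartition P → IsOpenPartition (inducedPart τ B φ P)) ∧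
    (∀ t ∈ Ttil τ P, caMap B φ (traj τ lab t) = traj τ labQ t) ∧
    (∀ x : Zd D → A, IsQSSeq τ x → IsQSSeq τ (caMap B φ x)) := by
  classical
  refine ⟨Ttil_eq τ B hB φ P, fun hO => openQ τ B hB φ hO,
    fun t ht => caMap_traj τ B φ P lab labQ hlab hlabQ ht, ?_⟩
  rintro x ⟨P', lab', t, hP', hlab', ht', rfl⟩
  haveI : Nonempty A := ⟨lab' t⟩
  set Q' := inducedPart τ B φ P' with hQ'
  set labQ' : Torus K → A := fun u =>
    if h : ∃ a, u ∈ Q' a then h.choose else Classical.arbitrary A with hlabQ'def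
  have hlabQ' : IsLabel Q' labQ' := by
    intro a u hu
    have h : ∃ a, u ∈ Q' a := ⟨a, hu⟩
    have hmem : u ∈ Q' h.choose := h.choose_spec
    have : labQ' u = h.choose := by simp [hlabQ'def, h]
    rw [this]
    by_contra hne
    exact Set.disjoint_left.1 (disjQ τ B φ hP'.disj hne) hmem hu
  refine ⟨Q', labQ', t, openQ τ B hB φ hP', hlabQ', ?_, ?_⟩
  · rw [hQ', Ttil_eq τ B hB φ P']; exact ht'
  · exact caMap_traj τ B φ P' lab' labQ' hlab' hlabQ' ht'


end
end

section
/- Let Φ be a cellular automaton on 𝒜^{ℤ^D} with neighbourhood 𝔅, and set B = #𝔅 and A = #𝒜. Then the induced map Φ̂ on 𝒜-labelled measurable partitions of 𝕋 is Lipschitz for the symmetric-difference pseudometric with constant 2·B·A^B: for all measurable partitions 𝒫, 𝒫′ of 𝕋, d_△(Φ̂(𝒫), Φ̂(𝒫′)) ≤ 2·B·A^B · d_△(𝒫, 𝒫′). -/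
open MeasureTheory Filter Topology
open scoped ENNReal

noncomputable section

variable {K D : ℕ} {A : Type*}

/-- The induced map `Φ̂` on measurable partitions is Lipschitz for `d_△`
with constant `2·B·A^B`, where `B = #𝔅` and `A = #𝒜`. -/
theorem inducedPart_lipschitz {K D : ℕ} (hK : 1 ≤ K) (hD : 1 ≤ D) {A : Type*} [Fintype A]
    (τ : Zd D →+ Torus K) (hinj : Function.Injective τ)
    (B : Finset (Zd D)) (φ : (B → A) → A)
    (P P' : A → Set (Torus K)) (hP : IsMeasPartition P) (hP' : IsMeasPartition P') :
    dSym (inducedPart τ B φ P) (inducedPart τ B φ P') ≤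
      2 * (B.card : ℝ) * (Fintype.card A : ℝ) ^ B.card * dSym P P' := by
  classical
  set S : Set (Torus K) := ⋃ x, symmDiff (P x) (P' x) with hS
  set Q := inducedPart τ B φ P with hQ
  set Q' := inducedPart τ B φ P' with hQ'
  -- auxiliary: one-sided difference
  have main : ∀ (R R' : A → Set (Torus K)) (a : A) (t : Torus K),
      t ∈ inducedPart τ B φ R a → t ∉ inducedPart τ B φ R' a →
      ∃ (b : B) (x : A), t + τ (b : Zd D) ∈ R x ∧ t + τ (b : Zd D) ∉ R' x := by
    intro R R' a t h1 h2
    simp only [inducedPart, Set.mem_iUnion, Set.mem_iInter, Set.mem_setOf_eq] at h1 h2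
    push_neg at h2
    obtain ⟨c, hc, hcb⟩ := h1
    obtain ⟨b, hb⟩ := h2 c hc
    exact ⟨b, c b, hcb b, hb⟩
  -- key containment
  have key : ∀ a, symmDiff (Q a) (Q' a) ⊆
      ⋃ b : B, (fun t => t + τ (b : Zd D)) ⁻¹' S := by
    intro a t ht
    rcases ht with ⟨h1, h2⟩ | ⟨h1, h2⟩
    · obtain ⟨b, x, hx1, hx2⟩ := main P P' a t h1 h2
      exact Set.mem_iUnion.2 ⟨b, Set.mem_iUnion.2 ⟨x, Or.inl ⟨hx1, hx2⟩⟩⟩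
    · obtain ⟨b, x, hx1, hx2⟩ := main P' P a t h1 h2
      exact Set.mem_iUnion.2 ⟨b, Set.mem_iUnion.2 ⟨x, Or.inr ⟨hx1, hx2⟩⟩⟩
  set M : ℝ≥0∞ := ∑ x, volume (symmDiff (P x) (P' x)) with hM
  have hMne : M ≠ ⊤ := by
    rw [hM]
    refine (ENNReal.sum_lt_top.2 fun x _ => ?_).ne
    exact (measure_lt_top volume _)
  have hSleM : volume S ≤ M := by
    rw [hS, hM]
    exact measure_iUnion_fintype_le volume _
  -- measure bound for each a
  have hbound : ∀ a, volume (symmDiff (Q a) (Q' a)) ≤ (B.card : ℝ≥0∞) * M := by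
    intro a
    calc volume (symmDiff (Q a) (Q' a))
        ≤ volume (⋃ b : B, (fun t => t + τ (b : Zd D)) ⁻¹' S) := measure_mono (key a)
      _ ≤ ∑' b : B, volume ((fun t => t + τ (b : Zd D)) ⁻¹' S) := measure_iUnion_le _
      _ = ∑' _b : B, volume S := by
          refine tsum_congr fun b => ?_
          exact measure_preimage_add_right volume _ S
      _ = (Fintype.card B : ℝ≥0∞) * volume S := by
          rw [tsum_fintype]; simp [Finset.sum_const, nsmul_eq_mul]
      _ = (B.card : ℝ≥0∞) * volume S := by rw [Fintype.card_coe]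
      _ ≤ (B.card : ℝ≥0∞) * M := mul_le_mul_right hSleM _
  have hMtoReal : M.toReal = dSym P P' := by
    rw [hM, dSym, ENNReal.toReal_sum]
    intro x _
    exact (measure_lt_top volume _).ne
  have hdnonneg : 0 ≤ dSym P P' := by
    apply Finset.sum_nonneg
    intro x _
    exact ENNReal.toReal_nonneg
  have hstep : dSym Q Q' ≤ (Fintype.card A : ℝ) * ((B.card : ℝ) * dSym P P') := by
    rw [dSym]
    calc ∑ a, (volume (symmDiff (Q a) (Q' a))).toReal
        ≤ ∑ _a : A, (B.card : ℝ) * dSym P P' := by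
          refine Finset.sum_le_sum fun a _ => ?_
          have := ENNReal.toReal_mono (by
              exact ENNReal.mul_ne_top (by simp) hMne) (hbound a)
          rwa [ENNReal.toReal_mul, ENNReal.toReal_natCast, hMtoReal] at this
      _ = (Fintype.card A : ℝ) * ((B.card : ℝ) * dSym P P') := by
          rw [Finset.sum_const, Finset.card_univ, nsmul_eq_mul]
  refine hstep.trans ?_
  rcases Nat.eq_zero_or_pos B.card with hB | hB
  · simp [hB]
  · have hA : (Fintype.card A : ℝ) ≤ (Fintype.card A : ℝ) ^ B.card := by
      exact_mod_cast Nat.le_self_pow hB.ne' (Fintype.card A)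
    have hApow : (0:ℝ) ≤ (Fintype.card A : ℝ) ^ B.card := by positivity
    have hBnn : (0:ℝ) ≤ (B.card : ℝ) := by positivity
    nlinarith [mul_nonneg hBnn hdnonneg, mul_nonneg (mul_nonneg hApow hBnn) hdnonneg]


end
end

section
/- Suppose τ : ℤ^D → 𝕋 is an injective group homomorphism with dense image. Let 𝒫 be a simple 𝒜-labelled open partition of 𝕋. Then 𝒫_σ is uniformly injective on 𝕋̃(𝒫): for every ε > 0 there exists M ∈ ℕ such that for all t, u ∈ 𝕋̃(𝒫), if 𝒫_σ(t)_ℓ = 𝒫_σ(u)_ℓ for every ℓ ∈ 𝔹(M), then d(t,u) < ε. In particular 𝒫_σ : 𝕋̃(𝒫) → 𝒜^{ℤ^D} is injective, and its inverse (from the image with the Cantor metric d_C) is uniformly continuous. -/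
open MeasureTheory Filter Topology
open scoped ENNReal

noncomputable section

variable {K D : ℕ} {A : Type*}

/-!
Suppose trajectories of `t n` and `u n` agree on ever larger boxes while `dist (t n) (u n) ≥ ε`.
By compactness `u n - t n → s` along a subsequence, with `s ≠ 0`. Since the lattice orbit is
dense, a finite box of translates `t n + τ ℓ` comes `δ`-close to any point `v`, and then
`u n + τ ℓ` is close to `v + s`; as the cells are open and the labels agree, `v` and `v + s`
lie in the same cell whenever both lie in cells. Hence `s` moves each cell into itself up to
the null complement of `⋃ a, P a`, i.e. `s` is a nonzero symmetry, contradicting simplicity.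
-/

lemma box_mono {D M N : ℕ} (h : M ≤ N) : box D M ⊆ box D N := by
  intro ℓ hℓ
  simp only [box, Fintype.mem_piFinset, Finset.mem_Ico] at hℓ ⊢
  intro i
  have := hℓ i
  omega

lemma exists_mem_box {D : ℕ} (ℓ : Zd D) : ∃ N, ℓ ∈ box D N := by
  refine ⟨∑ i, (ℓ i).natAbs + 1, ?_⟩
  simp only [box, Fintype.mem_piFinset, Finset.mem_Ico]
  intro i
  have hi : (ℓ i).natAbs ≤ ∑ j, (ℓ j).natAbs :=
    Finset.single_le_sum (fun j _ => Nat.zero_le (ℓ j).natAbs) (Finset.mem_univ i)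
  omega

lemma exists_subset_box {D : ℕ} (F : Finset (Zd D)) : ∃ M, F ⊆ box D M := by
  choose N hN using exists_mem_box (D := D)
  exact ⟨F.sup N, fun ℓ hℓ => box_mono (Finset.le_sup hℓ) (hN ℓ)⟩

lemma DenseRange.exists_box_dist_lt {X : Type*} [PseudoMetricSpace X] [CompactSpace X]
    {D : ℕ} {f : Zd D → X} (hf : DenseRange f) {δ : ℝ} (hδ : 0 < δ) :
    ∃ M, ∀ x, ∃ ℓ ∈ box D M, dist x (f ℓ) < δ := by
  have hcover : (Set.univ : Set X) ⊆ ⋃ ℓ, Metric.ball (f ℓ) δ := fun x _ =>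
    let ⟨ℓ, hℓ⟩ := hf.exists_dist_lt x hδ
    Set.mem_iUnion.2 ⟨ℓ, Metric.mem_ball.2 hℓ⟩
  obtain ⟨F, hF⟩ := isCompact_univ.elim_finite_subcover _ (fun _ => Metric.isOpen_ball) hcover
  obtain ⟨M, hM⟩ := exists_subset_box F
  refine ⟨M, fun x => ?_⟩
  obtain ⟨ℓ, hℓF, hℓ⟩ := Set.mem_iUnion₂.1 (hF (Set.mem_univ x))
  exact ⟨ℓ, hM hℓF, hℓ⟩

lemma IsOpenPartition.volume_compl_iUnion {P : A → Set (Torus K)} (hP : IsOpenPartition P) :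
    volume (⋃ a, P a)ᶜ = 0 := by
  have hvol : (volume : Measure (Torus K)) Set.univ = 1 := by
    rw [← Set.pi_univ Set.univ, volume_pi_pi]
    simp [AddCircle.measure_univ]
  rw [measure_compl (isOpen_iUnion hP.isOpen).measurableSet (by simp [hP.full]), hvol, hP.full,
    tsub_self]

lemma IsOpenPartition.symmDiff_null_of_forall_mem_eq {P : A → Set (Torus K)}
    (hP : IsOpenPartition P) {s : Torus K}
    (hs : ∀ a b v, v ∈ P a → v + s ∈ P b → a = b) (a : A) :
    volume (symmDiff (P a) ((fun x => x + s) '' P a)) = 0 := by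
  set N := (⋃ c, P c)ᶜ
  have hN : volume N = 0 := hP.volume_compl_iUnion
  have hsub : symmDiff (P a) ((fun x => x + s) '' P a) ⊆ (fun x => x + s) '' N ∪ N := by
    rintro y (⟨hy, hny⟩ | ⟨⟨x, hx, rfl⟩, hny⟩)
    · refine Or.inl ⟨y - s, fun hmem => hny ⟨y - s, ?_, sub_add_cancel y s⟩, sub_add_cancel y s⟩
      obtain ⟨c, hc⟩ := Set.mem_iUnion.1 hmem
      rwa [hs c a _ hc (by simpa using hy)] at hc
    · refine Or.inr fun hmem => hny ?_
      obtain ⟨c, hc⟩ := Set.mem_iUnion.1 hmem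
      rwa [← hs a c x hx hc] at hc
  refine measure_mono_null hsub (measure_union_null ?_ hN)
  rwa [Set.image_add_right, measure_preimage_add_right]

lemma mem_eq_of_agree_on_box_of_tendsto_sub {P : A → Set (Torus K)} {lab : Torus K → A}
    (hopen : ∀ a, IsOpen (P a)) (hlab : IsLabel P lab) {τ : Zd D →+ Torus K}
    (hdense : DenseRange τ) {t u : ℕ → Torus K}
    (hagree : ∀ n, ∀ ℓ ∈ box D n, lab (t n + τ ℓ) = lab (u n + τ ℓ)) {s : Torus K}
    (hs : Filter.Tendsto (fun n => u n - t n) atTop (𝓝 s)) (a b : A) (v : Torus K)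
    (hv : v ∈ P a) (hvs : v + s ∈ P b) : a = b := by
  have hU : IsOpen {p : Torus K × Torus K | p.1 ∈ P a ∧ p.1 + p.2 ∈ P b} :=
    ((hopen a).preimage continuous_fst).inter ((hopen b).preimage continuous_add)
  obtain ⟨δ, hδ, hball⟩ := Metric.isOpen_iff.1 hU (v, s) ⟨hv, hvs⟩
  obtain ⟨M, hM⟩ := hdense.exists_box_dist_lt hδ
  obtain ⟨n, hn⟩ := ((hs.eventually (Metric.ball_mem_nhds s hδ)).and
    (eventually_ge_atTop M)).exists
  obtain ⟨ℓ, hℓ, hdist⟩ := hM (v - t n)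
  have hnear : (t n + τ ℓ, u n - t n) ∈ Metric.ball (v, s) δ := by
    rw [Metric.mem_ball, Prod.dist_eq]
    refine max_lt ?_ hn.1
    rwa [dist_comm, ← dist_add_left (t n), add_sub_cancel] at hdist
  obtain ⟨hmem_a, hmem_b⟩ := hball hnear
  have hshift : (t n + τ ℓ) + (u n - t n) = u n + τ ℓ := by abel
  calc a = lab (t n + τ ℓ) := (hlab a _ hmem_a).symm
    _ = lab (u n + τ ℓ) := hagree n ℓ (box_mono hn.2 hℓ)
    _ = b := hlab b _ (hshift ▸ hmem_b)

lemma IsSimple.exists_dist_lt_of_agree_on_box {P : A → Set (Torus K)} (hP : IsOpenPartition P)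
    (hsimple : IsSimple P) {lab : Torus K → A} (hlab : IsLabel P lab) {τ : Zd D →+ Torus K}
    (hdense : DenseRange τ) {ε : ℝ} (hε : 0 < ε) :
    ∃ M, ∀ t u : Torus K, (∀ ℓ ∈ box D M, lab (t + τ ℓ) = lab (u + τ ℓ)) → dist t u < ε := by
  by_contra! hcon
  choose t u hagree hfar using hcon
  obtain ⟨s, -, φ, hφ, hs⟩ :=
    isCompact_univ.tendsto_subseq (x := fun n => u n - t n) fun _ => Set.mem_univ _
  have hagree' : ∀ n, ∀ ℓ ∈ box D n, lab (t (φ n) + τ ℓ) = lab (u (φ n) + τ ℓ) :=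
    fun n ℓ hℓ => hagree (φ n) ℓ (box_mono (hφ.id_le n) hℓ)
  have hs0 : s = 0 := hsimple s <| hP.symmDiff_null_of_forall_mem_eq
    (mem_eq_of_agree_on_box_of_tendsto_sub hP.isOpen hlab hdense hagree' hs)
  rw [hs0, tendsto_iff_dist_tendsto_zero] at hs
  obtain ⟨n, hn⟩ := (hs.eventually (gt_mem_nhds hε)).exists
  have : dist (t (φ n)) (u (φ n)) < ε := by
    simpa [dist_eq_norm, norm_sub_rev] using hn
  exact (hfar (φ n)).not_gt this

theorem simple_open_partition_uniformly_injective_general {K D : ℕ}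
    {A : Type*}
    (τ : Zd D →+ Torus K) (hdense : DenseRange τ)
    (P : A → Set (Torus K)) (hP : IsOpenPartition P) (hsimple : IsSimple P)
    (lab : Torus K → A) (hlab : IsLabel P lab) :
    (∀ ε : ℝ, 0 < ε → ∃ M : ℕ, ∀ t ∈ Ttil τ P, ∀ u ∈ Ttil τ P,
      (∀ ℓ ∈ box D M, lab (t + τ ℓ) = lab (u + τ ℓ)) → dist t u < ε) ∧
    Set.InjOn (traj τ lab) (Ttil τ P) := by
  have huniform := fun ε (hε : 0 < ε) => hsimple.exists_dist_lt_of_agree_on_box hP hlab hdense hε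
  refine ⟨fun ε hε => ?_, fun t _ u _ htu => ?_⟩
  · obtain ⟨M, hM⟩ := huniform ε hε
    exact ⟨M, fun t _ u _ => hM t u⟩
  · by_contra hne
    obtain ⟨M, hM⟩ := huniform (dist t u) (dist_pos.2 hne)
    exact lt_irrefl _ (hM t u fun ℓ _ => congrFun htu ℓ)

/-- For a simple open partition `𝒫`, the trajectory map is uniformly
injective on `𝕋̃(𝒫)`: for every `ε > 0` there is `M` such that agreement of trajectories
on the box `𝔹(M)` forces `d(t,u) < ε`; in particular `𝒫_σ` is injective on `𝕋̃(𝒫)`. -/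
theorem simple_open_partition_uniformly_injective {K D : ℕ} (hK : 1 ≤ K) (hD : 1 ≤ D)
    {A : Type*} [Fintype A]
    (τ : Zd D →+ Torus K) (hinj : Function.Injective τ) (hdense : DenseRange τ)
    (P : A → Set (Torus K)) (hP : IsOpenPartition P) (hsimple : IsSimple P)
    (lab : Torus K → A) (hlab : IsLabel P lab) :
    (∀ ε : ℝ, 0 < ε → ∃ M : ℕ, ∀ t ∈ Ttil τ P, ∀ u ∈ Ttil τ P,
      (∀ ℓ ∈ box D M, lab (t + τ ℓ) = lab (u + τ ℓ)) → dist t u < ε) ∧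
    Set.InjOn (traj τ lab) (Ttil τ P) :=
  simple_open_partition_uniformly_injective_general τ hdense P hP hsimple lab hlab

end
end

section
/- Let m be a map from subsets of 𝕋 to [0,∞] that is monotone (S₁ ⊆ S₂ implies m(S₁) ≤ m(S₂)), finitely subadditive (m(S₁ ∪ S₂) ≤ m(S₁) + m(S₂)), and translation-invariant (m(S + t) = m(S) for all t ∈ 𝕋). Let Φ be a cellular automaton on 𝒜^{ℤ^D} with neighbourhood 𝔅 ⊆ {−R,…,R}^D, and set C = (2R+1)^D. For a partition 𝒫 = {P_a}_{a∈𝒜} write ∂𝒫 = ⋃_{a∈𝒜} ∂P_a (topological boundaries). Then for every 𝒜-labelled open partition 𝒫 of 𝕋 and every n ≥ 1, m(∂(Φ̂^n(𝒫))) ≤ C · n^D · m(∂𝒫), where Φ̂^n denotes the n-fold iterate of the induced map Φ̂ on partitions. -/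
open MeasureTheory Filter Topology
open scoped ENNReal

noncomputable section

variable {K D : ℕ} {A : Type*}

/-! Each cell of `Φ̂(𝒬)` is a finite union of finite intersections of translates `σ^{-b}(Q_a)`,
`b ∈ 𝔅`, so `∂Φ̂(𝒬)` lies in the union of the translates `σ^{-b}(∂𝒬)`. Iterating, `∂(Φ̂ⁿ𝒫)` lies
in the union of the translates `σ^{-ℓ}(∂𝒫)` over `ℓ ∈ n𝔅 ⊆ {-nR,…,nR}^D`, a set of at most
`(2nR+1)^D ≤ (2R+1)^D nᴰ` translates, each of which has `m`-size `m(∂𝒫)`. -/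

open scoped Pointwise

section Frontier

variable {X ι : Type*} [TopologicalSpace X] [Finite ι]

theorem frontier_iUnion_subset_of_finite (f : ι → Set X) :
    frontier (⋃ i, f i) ⊆ ⋃ i, frontier (f i) := by
  intro x hx
  have hcl : x ∈ closure (⋃ i, f i) := hx.1
  rw [closure_iUnion_of_finite] at hcl
  obtain ⟨i, hi⟩ := Set.mem_iUnion.1 hcl
  exact Set.mem_iUnion.2 ⟨i, hi, fun h => hx.2 (interior_mono (Set.subset_iUnion f i) h)⟩

theorem frontier_iInter_subset_of_finite (f : ι → Set X) :
    frontier (⋂ i, f i) ⊆ ⋃ i, frontier (f i) := by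
  intro x hx
  have hint : x ∉ ⋂ i, interior (f i) := by
    rw [← interior_iInter_of_finite]
    exact hx.2
  obtain ⟨i, hi⟩ : ∃ i, x ∉ interior (f i) := by simpa using hint
  exact Set.mem_iUnion.2 ⟨i, closure_mono (Set.iInter_subset f i) hx.1, hi⟩

end Frontier

def partitionBoundary {X A : Type*} [TopologicalSpace X] (P : A → Set X) : Set X :=
  ⋃ a, frontier (P a)

theorem partitionBoundary_inducedPart_subset {K D : ℕ} {A : Type*} [Finite A]
    (τ : Zd D →+ Torus K) (B : Finset (Zd D)) (φ : (B → A) → A) (Q : A → Set (Torus K)) :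
    partitionBoundary (inducedPart τ B φ Q) ⊆
      ⋃ b ∈ B, (· + τ b) ⁻¹' partitionBoundary Q := by
  refine Set.iUnion_subset fun a => ?_
  rw [inducedPart, ← Set.iUnion_subtype (fun c : B → A => φ c = a)
    (fun c => ⋂ b : B, {t | t + τ b ∈ Q (c.1 b)})]
  refine (frontier_iUnion_subset_of_finite _).trans (Set.iUnion_subset fun c => ?_)
  refine (frontier_iInter_subset_of_finite _).trans (Set.iUnion_subset fun b => ?_)
  change frontier (Homeomorph.addRight (τ b) ⁻¹' Q (c.1 b)) ⊆ _
  rw [← Homeomorph.preimage_frontier]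
  exact fun x hx => Set.mem_biUnion b.2 (Set.mem_iUnion.2 ⟨c.1 b, hx⟩)

theorem partitionBoundary_iterate_inducedPart_subset {K D : ℕ} {A : Type*} [Finite A]
    (τ : Zd D →+ Torus K) (B : Finset (Zd D)) (φ : (B → A) → A) (P : A → Set (Torus K)) :
    ∀ n : ℕ, partitionBoundary ((inducedPart τ B φ)^[n] P) ⊆
      ⋃ ℓ ∈ n • B, (· + τ ℓ) ⁻¹' partitionBoundary P
  | 0 => by simp
  | n + 1 => by
    rw [Function.iterate_succ_apply']
    intro x hx
    obtain ⟨b, hb, hxb⟩ := Set.mem_iUnion₂.1 (partitionBoundary_inducedPart_subset τ B φ _ hx)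
    obtain ⟨ℓ, hℓ, hxℓ⟩ :=
      Set.mem_iUnion₂.1 (partitionBoundary_iterate_inducedPart_subset τ B φ P n hxb)
    refine Set.mem_iUnion₂.2 ⟨ℓ + b, ?_, ?_⟩
    · rw [succ_nsmul]
      exact Finset.add_mem_add hℓ hb
    · simpa only [Set.mem_preimage, map_add, add_comm ℓ b, ← add_assoc] using hxℓ

def cube (D r : ℕ) : Finset (Zd D) :=
  Fintype.piFinset fun _ => Finset.Icc (-(r : ℤ)) r

theorem mem_cube {D r : ℕ} {ℓ : Zd D} : ℓ ∈ cube D r ↔ ∀ i, |ℓ i| ≤ r := by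
  simp only [cube, Fintype.mem_piFinset, Finset.mem_Icc, abs_le]

theorem card_cube (D r : ℕ) : (cube D r).card = (2 * r + 1) ^ D := by
  have hIcc : (Finset.Icc (-(r : ℤ)) r).card = 2 * r + 1 := by
    rw [Int.card_Icc]
    omega
  simp [cube, Fintype.card_piFinset, hIcc]

theorem nsmul_subset_cube {D R : ℕ} {B : Finset (Zd D)} (hBR : ∀ b ∈ B, ∀ i, |b i| ≤ (R : ℤ)) :
    ∀ n : ℕ, n • B ⊆ cube D (n * R)
  | 0 => by simp [mem_cube]
  | n + 1 => by
    rw [succ_nsmul]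
    intro x hx
    obtain ⟨ℓ, hℓ, b, hb, rfl⟩ := Finset.mem_add.1 hx
    refine mem_cube.2 fun i => ?_
    calc |ℓ i + b i| ≤ |ℓ i| + |b i| := abs_add_le _ _
      _ ≤ (n * R : ℕ) + R := add_le_add (mem_cube.1 (nsmul_subset_cube hBR n hℓ) i) (hBR b hb i)
      _ = ((n + 1) * R : ℕ) := by push_cast; ring

theorem card_cube_mul_le {D R n : ℕ} (hn : 1 ≤ n) :
    (cube D (n * R)).card ≤ (2 * R + 1) ^ D * n ^ D := by
  rw [card_cube, ← mul_pow]
  exact Nat.pow_le_pow_left (by nlinarith) D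

section SubadditiveSetFunction

variable {X : Type*} (m : Set X → ℝ≥0∞)

theorem apply_biUnion_le_sum_of_subadditive (hsub : ∀ S₁ S₂ : Set X, m (S₁ ∪ S₂) ≤ m S₁ + m S₂)
    {ι : Type*} (f : ι → Set X) {S : Finset ι} (hS : S.Nonempty) :
    m (⋃ i ∈ S, f i) ≤ ∑ i ∈ S, m (f i) := by
  classical
  induction hS using Finset.Nonempty.cons_induction with
  | singleton i => simp
  | cons i S hi _ ih =>
    rw [Finset.sum_cons, Finset.cons_eq_insert, Finset.set_biUnion_insert]
    exact (hsub _ _).trans (add_le_add_right ih _)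

theorem apply_biUnion_preimage_add_le_card_mul [AddGroup X]
    (hsub : ∀ S₁ S₂ : Set X, m (S₁ ∪ S₂) ≤ m S₁ + m S₂)
    (htrans : ∀ (S : Set X) (t : X), m ((· + t) '' S) = m S)
    {ι : Type*} (g : ι → X) {S : Finset ι} (hS : S.Nonempty) (F : Set X) :
    m (⋃ i ∈ S, (· + g i) ⁻¹' F) ≤ S.card * m F := by
  have hpre : ∀ i, m ((· + g i) ⁻¹' F) = m F := fun i => by
    rw [← Set.image_add_right', htrans]
  calc m (⋃ i ∈ S, (· + g i) ⁻¹' F) ≤ ∑ i ∈ S, m ((· + g i) ⁻¹' F) :=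
        apply_biUnion_le_sum_of_subadditive m hsub _ hS
    _ = S.card * m F := by simp [hpre]

end SubadditiveSetFunction

theorem boundary_grows_polynomially_general {K D : ℕ}
    {A : Type*} [Fintype A]
    (τ : Zd D →+ Torus K)
    (m : Set (Torus K) → ℝ≥0∞)
    (hmono : ∀ S₁ S₂ : Set (Torus K), S₁ ⊆ S₂ → m S₁ ≤ m S₂)
    (hsub : ∀ S₁ S₂ : Set (Torus K), m (S₁ ∪ S₂) ≤ m S₁ + m S₂)
    (htrans : ∀ (S : Set (Torus K)) (t : Torus K), m ((fun x => x + t) '' S) = m S)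
    (B : Finset (Zd D)) (R : ℕ) (hBR : ∀ b ∈ B, ∀ i : Fin D, |b i| ≤ (R : ℤ))
    (φ : (B → A) → A)
    (P : A → Set (Torus K)) (n : ℕ) (hn : 1 ≤ n) :
    m (⋃ a, frontier (((inducedPart τ B φ)^[n] P) a)) ≤
      (((2 * R + 1) ^ D * n ^ D : ℕ) : ℝ≥0∞) * m (⋃ a, frontier (P a)) := by
  have hcover : partitionBoundary ((inducedPart τ B φ)^[n] P) ⊆
      ⋃ ℓ ∈ cube D (n * R), (· + τ ℓ) ⁻¹' partitionBoundary P :=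
    (partitionBoundary_iterate_inducedPart_subset τ B φ P n).trans
      (Set.biUnion_subset_biUnion_left (nsmul_subset_cube hBR n))
  have hcube : (cube D (n * R)).Nonempty :=
    ⟨0, mem_cube.2 fun _ => abs_zero.trans_le (Nat.cast_nonneg _)⟩
  calc m (partitionBoundary ((inducedPart τ B φ)^[n] P))
      ≤ m (⋃ ℓ ∈ cube D (n * R), (· + τ ℓ) ⁻¹' partitionBoundary P) := hmono _ _ hcover
    _ ≤ (cube D (n * R)).card * m (partitionBoundary P) :=
      apply_biUnion_preimage_add_le_card_mul m hsub htrans τ hcube _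
    _ ≤ (((2 * R + 1) ^ D * n ^ D : ℕ) : ℝ≥0∞) * m (partitionBoundary P) := by
      gcongr
      exact_mod_cast card_cube_mul_le hn

/-- For any monotone, finitely subadditive, translation-invariant
`m : 𝒫(𝕋) → [0,∞]` and any CA with neighbourhood `𝔅 ⊆ {-R,…,R}^D`, the boundary of the
iterated induced partition grows at most polynomially:
`m(∂(Φ̂^n 𝒫)) ≤ (2R+1)^D · n^D · m(∂𝒫)`. -/
theorem boundary_grows_polynomially {K D : ℕ} (hK : 1 ≤ K) (hD : 1 ≤ D)
    {A : Type*} [Fintype A]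
    (τ : Zd D →+ Torus K) (hinj : Function.Injective τ)
    (m : Set (Torus K) → ℝ≥0∞)
    (hmono : ∀ S₁ S₂ : Set (Torus K), S₁ ⊆ S₂ → m S₁ ≤ m S₂)
    (hsub : ∀ S₁ S₂ : Set (Torus K), m (S₁ ∪ S₂) ≤ m S₁ + m S₂)
    (htrans : ∀ (S : Set (Torus K)) (t : Torus K), m ((fun x => x + t) '' S) = m S)
    (B : Finset (Zd D)) (R : ℕ) (hBR : ∀ b ∈ B, ∀ i : Fin D, |b i| ≤ (R : ℤ))
    (φ : (B → A) → A)
    (P : A → Set (Torus K)) (hP : IsOpenPartition P) (n : ℕ) (hn : 1 ≤ n) :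
    m (⋃ a, frontier (((inducedPart τ B φ)^[n] P) a)) ≤
      (((2 * R + 1) ^ D * n ^ D : ℕ) : ℝ≥0∞) * m (⋃ a, frontier (P a)) :=
  boundary_grows_polynomially_general τ m hmono hsub htrans B R hBR φ P n hn

end
end

section
/- For n ∈ ℕ let ν(n) denote the number of ones in the binary expansion of n, and let α = log₂(3/2). Then for every integer N ≥ 1, (1/3)·N^α < (1/N)·Σ_{n=0}^{N−1} 2^{ν(n)} ≤ 3·N^α. Consequently, if Ã(N) = (1/N)·Σ_{n=0}^{N−1} 2^{ν(n)}, then lim_{N→∞} log(Ã(N))/log(N) = α. -/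
open MeasureTheory Filter Topology
open scoped ENNReal

noncomputable section

variable {K D : ℕ} {A : Type*}

/-- `ν(n)`: the number of ones in the binary expansion of `n`. -/
def binaryOnes (n : ℕ) : ℕ := (Nat.digits 2 n).count 1


/-- Auxiliary: partial sums `S(N) = Σ_{n<N} 2^(ν n)`. -/
def Ssum (N : ℕ) : ℝ := ∑ n ∈ Finset.range N, (2 : ℝ) ^ binaryOnes n

lemma bo_two_mul (n : ℕ) : binaryOnes (2*n) = binaryOnes n := by
  rcases Nat.eq_zero_or_pos n with h | h
  · simp [h]
  · unfold binaryOnes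
    rw [Nat.digits_def' (by norm_num : 1 < 2) (by omega)]
    simp [Nat.mul_div_cancel_left _ (by norm_num : 0 < 2), Nat.mul_mod_right]

lemma bo_two_mul_add_one (n : ℕ) : binaryOnes (2*n+1) = binaryOnes n + 1 := by
  unfold binaryOnes
  rw [Nat.digits_def' (by norm_num : 1 < 2) (by omega)]
  have h1 : (2*n+1) % 2 = 1 := by omega
  have h2 : (2*n+1) / 2 = n := by omega
  rw [h1, h2, List.count_cons]
  simp

lemma sum_range_double (f : ℕ → ℝ) (N : ℕ) :
    ∑ n ∈ Finset.range (2*N), f n = ∑ m ∈ Finset.range N, (f (2*m) + f (2*m+1)) := by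
  induction N with
  | zero => simp
  | succ N ih =>
      rw [Finset.sum_range_succ, ← ih, Nat.mul_succ, Finset.sum_range_succ,
        Finset.sum_range_succ]
      ring_nf

lemma Ssum_pow (k : ℕ) : Ssum (2^k) = 3^k := by
  induction k with
  | zero => simp [Ssum, binaryOnes]
  | succ k ih =>
      have : (2:ℕ)^(k+1) = 2 * 2^k := by ring
      rw [Ssum, this, sum_range_double]
      have : ∀ m ∈ Finset.range (2^k),
          (2:ℝ)^binaryOnes (2*m) + 2^binaryOnes (2*m+1) = 3 * 2^binaryOnes m := by
        intro m _
        rw [bo_two_mul, bo_two_mul_add_one, pow_succ]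
        ring
      rw [Finset.sum_congr rfl this, ← Finset.mul_sum, ← Ssum, ih, pow_succ]
      ring

lemma Ssum_mono : Monotone Ssum := by
  intro a b h
  exact Finset.sum_le_sum_of_subset_of_nonneg (Finset.range_subset_range.2 h)
    (fun i _ _ => by positivity)

lemma two_rpow_L : (2:ℝ) ^ Real.logb 2 3 = 3 :=
  Real.rpow_logb (by norm_num) (by norm_num) (by norm_num)

lemma pow_rpow_L (k : ℕ) : ((2:ℝ)^k) ^ Real.logb 2 3 = 3^k := by
  rw [← Real.rpow_natCast 2 k, ← Real.rpow_mul (by norm_num), mul_comm,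
    Real.rpow_mul (by norm_num), two_rpow_L, Real.rpow_natCast]

lemma L_pos : 0 < Real.logb 2 3 := Real.logb_pos (by norm_num) (by norm_num)

lemma main_bounds (N : ℕ) (hN : 1 ≤ N) :
    (1/3 : ℝ) * (N:ℝ) ^ Real.logb 2 3 < Ssum N ∧
    Ssum N ≤ 3 * (N:ℝ) ^ Real.logb 2 3 := by
  set k := Nat.log 2 N with hk
  have h1 : 2^k ≤ N := Nat.pow_log_le_self 2 (by omega)
  have h2 : N < 2^(k+1) := Nat.lt_pow_succ_log_self (by norm_num) N
  have h1' : ((2:ℝ)^k) ≤ (N:ℝ) := by exact_mod_cast h1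
  have h2' : (N:ℝ) < (2:ℝ)^(k+1) := by exact_mod_cast h2
  constructor
  · have hlt : (N:ℝ) ^ Real.logb 2 3 < 3^(k+1) := by
      rw [← pow_rpow_L]
      exact Real.rpow_lt_rpow (by positivity) h2' L_pos
    have : Ssum (2^k) ≤ Ssum N := Ssum_mono h1
    rw [Ssum_pow] at this
    rw [pow_succ] at hlt
    linarith
  · have hle : ((2:ℝ)^k) ^ Real.logb 2 3 ≤ (N:ℝ) ^ Real.logb 2 3 :=
      Real.rpow_le_rpow (by positivity) h1' (le_of_lt L_pos)
    rw [pow_rpow_L] at hle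
    have : Ssum N ≤ Ssum (2^(k+1)) := Ssum_mono (le_of_lt h2)
    rw [Ssum_pow, pow_succ, mul_comm] at this
    nlinarith [this, hle]

lemma alpha_add_one : Real.logb 2 (3/2) + 1 = Real.logb 2 3 := by
  rw [Real.logb_div (by norm_num) (by norm_num), Real.logb_self_eq_one (by norm_num)]
  ring

lemma rpow_key (N : ℕ) (hN : 1 ≤ N) :
    (N:ℝ) ^ Real.logb 2 (3/2) * N = (N:ℝ) ^ Real.logb 2 3 := by
  have h0 : (N:ℝ) ≠ 0 := by positivity
  rw [← Real.rpow_add_one h0, alpha_add_one]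

/-- With `ν` the binary digit-sum and `α = log₂(3/2)`:
`(1/3)·N^α < (1/N)·Σ_{n<N} 2^{ν(n)} ≤ 3·N^α` for all `N ≥ 1`, and consequently
`log(Ã(N))/log(N) → α`. -/
theorem average_two_pow_binaryOnes :
    (∀ N : ℕ, 1 ≤ N →
      (1 / 3 : ℝ) * (N : ℝ) ^ (Real.logb 2 (3 / 2)) <
        (1 / (N : ℝ)) * ∑ n ∈ Finset.range N, (2 : ℝ) ^ binaryOnes n ∧
      (1 / (N : ℝ)) * ∑ n ∈ Finset.range N, (2 : ℝ) ^ binaryOnes n ≤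
        3 * (N : ℝ) ^ (Real.logb 2 (3 / 2))) ∧
    Filter.Tendsto
      (fun N : ℕ =>
        Real.log ((1 / (N : ℝ)) * ∑ n ∈ Finset.range N, (2 : ℝ) ^ binaryOnes n) /
          Real.log N)
      Filter.atTop (nhds (Real.logb 2 (3 / 2))) := by
  have hbounds : ∀ N : ℕ, 1 ≤ N →
      (1 / 3 : ℝ) * (N : ℝ) ^ (Real.logb 2 (3 / 2)) <
        (1 / (N : ℝ)) * Ssum N ∧
      (1 / (N : ℝ)) * Ssum N ≤ 3 * (N : ℝ) ^ (Real.logb 2 (3 / 2)) := by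
    intro N hN
    have hNpos : (0:ℝ) < N := by exact_mod_cast hN
    obtain ⟨hlo, hhi⟩ := main_bounds N hN
    have hS : (1/(N:ℝ)) * Ssum N = Ssum N / N := by ring
    rw [hS]
    constructor
    · rw [lt_div_iff₀ hNpos, mul_assoc, rpow_key N hN]
      linarith
    · rw [div_le_iff₀ hNpos, mul_assoc, rpow_key N hN]
      linarith
  refine ⟨hbounds, ?_⟩
  set α := Real.logb 2 (3/2) with hα
  have hlogtop : Filter.Tendsto (fun N : ℕ => Real.log N) Filter.atTop Filter.atTop :=
    Real.tendsto_log_atTop.comp tendsto_natCast_atTop_atTop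
  have h0 : Filter.Tendsto (fun N : ℕ => Real.log 3 / Real.log N) Filter.atTop (nhds 0) :=
    Filter.Tendsto.div_atTop tendsto_const_nhds hlogtop
  have hg : Filter.Tendsto (fun N : ℕ => α - Real.log 3 / Real.log N) Filter.atTop (nhds α) := by
    simpa using tendsto_const_nhds.sub h0
  have hh : Filter.Tendsto (fun N : ℕ => α + Real.log 3 / Real.log N) Filter.atTop (nhds α) := by
    simpa using tendsto_const_nhds.add h0
  apply tendsto_of_tendsto_of_tendsto_of_le_of_le' hg hh
  · filter_upwards [Filter.eventually_ge_atTop 2] with N hN2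
    have hN : 1 ≤ N := by omega
    have hNpos : (0:ℝ) < N := by exact_mod_cast hN
    have hN1 : (1:ℝ) < N := by exact_mod_cast hN2
    have hlogN : 0 < Real.log N := Real.log_pos hN1
    obtain ⟨hlo, _⟩ := hbounds N hN
    have hA : (0:ℝ) < (1/(N:ℝ)) * Ssum N := lt_trans (by positivity) hlo
    have hloglo : Real.log ((1/3 : ℝ) * (N:ℝ) ^ α) ≤ Real.log ((1/(N:ℝ)) * Ssum N) :=
      Real.log_le_log (by positivity) (le_of_lt hlo)
    have heq : Real.log ((1/3 : ℝ) * (N:ℝ) ^ α) = -Real.log 3 + α * Real.log N := by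
      rw [Real.log_mul (by norm_num) (by positivity), Real.log_rpow hNpos]
      simp [Real.log_div]
    rw [heq] at hloglo
    show α - Real.log 3 / Real.log N ≤ Real.log ((1/(N:ℝ)) * Ssum N) / Real.log N
    rw [le_div_iff₀ hlogN]
    have hexp : (α - Real.log 3 / Real.log N) * Real.log N
        = α * Real.log N - Real.log 3 := by field_simp
    rw [hexp]
    linarith
  · filter_upwards [Filter.eventually_ge_atTop 2] with N hN2
    have hN : 1 ≤ N := by omega
    have hNpos : (0:ℝ) < N := by exact_mod_cast hN
    have hN1 : (1:ℝ) < N := by exact_mod_cast hN2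
    have hlogN : 0 < Real.log N := Real.log_pos hN1
    obtain ⟨hlo, hhi⟩ := hbounds N hN
    have hA : (0:ℝ) < (1/(N:ℝ)) * Ssum N := lt_trans (by positivity) hlo
    have hloghi : Real.log ((1/(N:ℝ)) * Ssum N) ≤ Real.log (3 * (N:ℝ) ^ α) :=
      Real.log_le_log hA hhi
    have heq : Real.log ((3 : ℝ) * (N:ℝ) ^ α) = Real.log 3 + α * Real.log N := by
      rw [Real.log_mul (by norm_num) (by positivity), Real.log_rpow hNpos]
    rw [heq] at hloghi
    show Real.log ((1/(N:ℝ)) * Ssum N) / Real.log N ≤ α + Real.log 3 / Real.log N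
    rw [div_le_iff₀ hlogN]
    have hexp : (α + Real.log 3 / Real.log N) * Real.log N
        = α * Real.log N + Real.log 3 := by field_simp
    rw [hexp]
    linarith


end
end

section
/- Fix an integer p ≥ 2 and integers D, K ≥ 1, and let 𝕋 = (ℝ/ℤ)^K with quotient metric d and Haar probability measure λ. Then for λ^D-almost every (a₁,…,a_D) ∈ 𝕋^D the associated rotation system is minimal along powers of p: for all targets t₁,…,t_D ∈ 𝕋 and every ε > 0 there exists m ∈ ℕ such that d(p^m·a_d, t_d) < ε for every d ∈ {1,…,D}, where p^m·a_d denotes the p^m-fold sum of a_d in the group 𝕋. -/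
open MeasureTheory Filter Topology
open scoped ENNReal

noncomputable section

variable {K D : ℕ} {A : Type*}

/-!
Multiplication by `p` is a continuous surjective endomorphism of the compact group `𝕋^D` whose
iterated kernels, the points killed by some `p ^ n`, are dense; hence it is ergodic for Haar
measure. The forward orbit of almost every point under an ergodic map visits every set of positive
measure, in particular every member of a countable basis of the topology, so it is dense.
-/

open Set
open scoped Pointwise

theorem AddCircle.dense_setOf_pow_nsmul_eq_zero {T : ℝ} [hT : Fact (0 < T)] {p : ℕ}
    (hp : 1 < p) : Dense {x : AddCircle T | ∃ n : ℕ, p ^ n • x = 0} := by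
  rw [Metric.dense_iff]
  intro x r hr
  obtain ⟨y, rfl⟩ := QuotientAddGroup.mk_surjective x
  have hp' : (1 : ℝ) < p := by exact_mod_cast hp
  obtain ⟨n, hn⟩ := exists_pow_lt_of_lt_one (div_pos hr hT.out) (inv_lt_one_of_one_lt₀ hp')
  set h : ℝ := T / (p : ℝ) ^ n with h_def
  have hh : 0 < h := div_pos hT.out (by positivity)
  have hhr : h < r := by
    rw [h_def, div_eq_mul_inv, ← inv_pow]
    calc T * (p : ℝ)⁻¹ ^ n < T * (r / T) := mul_lt_mul_of_pos_left hn hT.out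
      _ = r := mul_div_cancel₀ r hT.out.ne'
  -- the grid point `⌊y / h⌋ * h` of mesh `h = T / p ^ n` just below `y`
  set k : ℤ := ⌊y / h⌋
  refine ⟨((k * h : ℝ) : AddCircle T), ?_, n, ?_⟩
  · have hk₁ : (k : ℝ) * h ≤ y := (le_div_iff₀ hh).mp (Int.floor_le _)
    have hk₂ : y < (k : ℝ) * h + h := by
      have := (div_lt_iff₀ hh).mp (Int.lt_floor_add_one (y / h))
      linarith
    rw [Metric.mem_ball, dist_eq_norm, ← AddCircle.coe_sub]
    refine QuotientAddGroup.norm_mk_le_norm.trans_lt ?_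
    rw [Real.norm_eq_abs, abs_sub_lt_iff]
    constructor <;> linarith
  · rw [← AddCircle.coe_nsmul, AddCircle.coe_eq_zero_iff]
    refine ⟨k, ?_⟩
    rw [h_def, nsmul_eq_mul, zsmul_eq_mul]
    push_cast
    field_simp

theorem dense_setOf_pow_nsmul_eq_zero_pi {ι : Type*} [Fintype ι] {G : ι → Type*}
    [∀ i, AddMonoid (G i)] [∀ i, TopologicalSpace (G i)] {p : ℕ}
    (h : ∀ i, Dense {x : G i | ∃ n : ℕ, p ^ n • x = 0}) :
    Dense {x : ∀ i, G i | ∃ n : ℕ, p ^ n • x = 0} := by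
  refine (dense_pi univ fun i _ => h i).mono fun x hx => ?_
  choose n hn using fun i => hx i (mem_univ i)
  refine ⟨∑ i, n i, funext fun i => ?_⟩
  obtain ⟨c, hc⟩ := Nat.exists_eq_add_of_le (Finset.single_le_sum (fun j _ => Nat.zero_le (n j))
    (Finset.mem_univ i))
  rw [Pi.smul_apply, hc, pow_add, mul_nsmul, hn i, nsmul_zero, Pi.zero_apply]

theorem AddCircle.ergodic_nsmul_pi_pi {T : ℝ} [Fact (0 < T)] {ι κ : Type*} [Fintype ι]
    [Fintype κ] {p : ℕ} (hp : 1 < p) :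
    Ergodic (fun x : ι → κ → AddCircle T => p • x) volume := by
  have : BorelSpace (ι → κ → AddCircle T) := Pi.borelSpace
  have : (volume : Measure (ι → κ → AddCircle T)).IsAddHaarMeasure :=
    Measure.pi.isAddHaarMeasure _
  let f := DistribSMul.toAddMonoidHom (ι → κ → AddCircle T) p
  have hker : ⋃ n, f^[n] ⁻¹' 0 = {x | ∃ n : ℕ, p ^ n • x = 0} := by
    ext x
    simp only [mem_iUnion, mem_preimage, Set.mem_zero, mem_ofPred_eq]
    exact exists_congr fun n => by rw [← smul_iterate_apply]; rfl
  have hsurj : Function.Surjective f := fun y =>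
    ⟨DivisibleBy.div y (p : ℤ), by
      rw [DistribSMul.toAddMonoidHom_apply, ← natCast_zsmul,
        DivisibleBy.div_cancel y (by omega)]⟩
  refine f.ergodic_of_dense_iUnion_preimage_zero ?_ (continuous_const_smul _) hsurj
  rw [hker]
  exact dense_setOf_pow_nsmul_eq_zero_pi fun _ =>
    dense_setOf_pow_nsmul_eq_zero_pi fun _ => AddCircle.dense_setOf_pow_nsmul_eq_zero hp

namespace Ergodic

variable {α : Type*} [MeasurableSpace α] {μ : Measure α} [IsFiniteMeasure μ] {f : α → α}

theorem ae_exists_iterate_mem (hf : Ergodic f μ) {s : Set α} (hs : MeasurableSet s)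
    (h : μ s ≠ 0) : ∀ᵐ x ∂μ, ∃ m, f^[m] x ∈ s := by
  set S := ⋃ m, f^[m] ⁻¹' s
  have hS : MeasurableSet S := .iUnion fun m => hs.preimage (hf.measurable.iterate m)
  have hfS : f ⁻¹' S ⊆ S := by
    simp only [S, preimage_iUnion, ← preimage_comp, ← Function.iterate_succ]
    exact iUnion_subset fun m => subset_iUnion (fun m => f^[m] ⁻¹' s) (m + 1)
  rcases hf.ae_empty_or_univ_of_preimage_ae_le hS.nullMeasurableSet hfS.eventuallyLE
    with hnull | hfull
  · exact absurd (measure_mono_null (subset_iUnion (fun m => f^[m] ⁻¹' s) 0)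
      (ae_eq_empty.mp hnull)) h
  · exact mem_of_superset (mem_ae_iff.mpr (ae_eq_univ.mp hfull)) fun x => mem_iUnion.mp

theorem ae_denseRange_iterate [TopologicalSpace α] [SecondCountableTopology α]
    [OpensMeasurableSpace α] [μ.IsOpenPosMeasure] (hf : Ergodic f μ) :
    ∀ᵐ x ∂μ, DenseRange fun m => f^[m] x := by
  obtain ⟨B, hBc, -, hB⟩ := TopologicalSpace.exists_countable_basis α
  have hvisit : ∀ᵐ x ∂μ, ∀ o ∈ B, o.Nonempty → ∃ m, f^[m] x ∈ o := by
    refine (ae_ball_iff hBc).mpr fun o ho => ?_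
    by_cases hne : o.Nonempty
    · exact (hf.ae_exists_iterate_mem (hB.isOpen ho).measurableSet
        ((hB.isOpen ho).measure_ne_zero μ hne)).mono fun x hx _ => hx
    · exact .of_forall fun x hne' => absurd hne' hne
  filter_upwards [hvisit] with x hx
  refine hB.dense_iff.mpr fun o ho hne => ?_
  obtain ⟨m, hm⟩ := hx o ho hne
  exact ⟨_, hm, m, rfl⟩

end Ergodic

theorem minimal_along_powers_general {p D K : ℕ} (hp : 2 ≤ p) :
    ∀ᵐ a ∂(volume : Measure (Fin D → Torus K)),
      ∀ t : Fin D → Torus K, ∀ ε : ℝ, 0 < ε →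
        ∃ m : ℕ, ∀ d : Fin D, dist ((p ^ m : ℕ) • a d) (t d) < ε := by
  filter_upwards [(AddCircle.ergodic_nsmul_pi_pi hp).ae_denseRange_iterate] with a ha t ε hε
  obtain ⟨m, hm⟩ := ha.exists_dist_lt t hε
  refine ⟨m, fun d => ?_⟩
  rw [smul_iterate, dist_comm] at hm
  exact (dist_le_pi_dist _ _ d).trans_lt hm

/-- For every integer `p ≥ 2`, for `λ^D`-almost every
`(a₁,…,a_D) ∈ 𝕋^D`, the rotation system is minimal along powers of `p`: every tuple of
targets can be simultaneously `ε`-approximated by `(p^m·a₁,…,p^m·a_D)`. -/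
theorem minimal_along_powers {p D K : ℕ} (hp : 2 ≤ p) (hD : 1 ≤ D) (hK : 1 ≤ K) :
    ∀ᵐ a ∂(volume : Measure (Fin D → Torus K)),
      ∀ t : Fin D → Torus K, ∀ ε : ℝ, 0 < ε →
        ∃ m : ℕ, ∀ d : Fin D, dist ((p ^ m : ℕ) • a d) (t d) < ε :=
  minimal_along_powers_general hp
end
end
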